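/- arXiv:2406.12349 — 3 statements merged into one kernel-verified Lean document; each statement's English description precedes it below -/
import Mathlib

section
/- Let T ≥ 1, let β₁, …, β_T ∈ (0,1), set α_t = 1 − β_t and ᾱ_t = ∏_{s=1}^{t} α_s, and let z₀ ∈ ℝ. Suppose ε₁, …, ε_T are independent real random variables on a probability space, each with law gaussianReal 0 1. Define Z₀ = z₀ and Z_t = √α_t · Z_{t−1} + √β_t · ε_t for 1 ≤ t ≤ T. Then for every t with 1 ≤ t ≤ T, the law of Z_t is gaussianReal (√ᾱ_t·z₀) (1−ᾱ_t); equivalently, Z_t has the same distribution as √ᾱ_t·z₀ + √(1−ᾱ_t)·ε for a standard Gaussian ε. -/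
/-!
Induction on `t`. The state `Z (t - 1)` is a measurable function of the noises up to time `t - 1`,
hence independent of `ε t`. For independent `X ∼ N(m, 1 - ρ)` and `Y ∼ N(0, 1)`, the
variance-preserving step `√a * X + √(1 - a) * Y` has law `N(√a * m, 1 - ρ a)`, because Gaussian
laws convolve by adding means and variances. With `ρ = ᾱ (t - 1)` and `a = α t` this is the claim
at time `t`, as `ᾱ t = ᾱ (t - 1) * α t`.
-/

open MeasureTheory ProbabilityTheory Finset
open scoped NNReal

section

variable {Ω : Type*} [MeasurableSpace Ω] {P : Measure Ω}

lemma hasLaw_of_map_eq_gaussianReal {X : Ω → ℝ} {m : ℝ} {v : ℝ≥0}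
    (hX : P.map X = gaussianReal m v) : HasLaw X (gaussianReal m v) P :=
  ⟨AEMeasurable.of_map_ne_zero (hX ▸ IsProbabilityMeasure.ne_zero _), hX⟩

lemma map_const_mul_add_const_mul_of_indepFun {X Y : Ω → ℝ} {m₁ m₂ : ℝ} {v₁ v₂ : ℝ≥0}
    (hXY : IndepFun X Y P) (hX : P.map X = gaussianReal m₁ v₁)
    (hY : P.map Y = gaussianReal m₂ v₂) (c d : ℝ) :
    P.map (fun ω => c * X ω + d * Y ω) =
      gaussianReal (c * m₁ + d * m₂)
        (.mk (c ^ 2) (sq_nonneg c) * v₁ + .mk (d ^ 2) (sq_nonneg d) * v₂) :=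
  gaussianReal_add_gaussianReal_of_indepFun
    (hXY.comp (measurable_const_mul c) (measurable_const_mul d))
    (gaussianReal_const_mul (hasLaw_of_map_eq_gaussianReal hX) c).map_eq
    (gaussianReal_const_mul (hasLaw_of_map_eq_gaussianReal hY) d).map_eq

lemma map_sqrt_mul_add_sqrt_one_sub_mul {X Y : Ω → ℝ} {m ρ a : ℝ} (hρ : ρ ≤ 1) (ha₀ : 0 ≤ a)
    (ha₁ : a ≤ 1) (hXY : IndepFun X Y P) (hX : P.map X = gaussianReal m (1 - ρ).toNNReal)
    (hY : P.map Y = gaussianReal 0 1) :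
    P.map (fun ω => √a * X ω + √(1 - a) * Y ω) = gaussianReal (√a * m) (1 - ρ * a).toNNReal := by
  rw [map_const_mul_add_const_mul_of_indepFun hXY hX hY, mul_zero, add_zero]
  congr 1
  apply NNReal.eq
  have hρa : 0 ≤ 1 - ρ * a := by nlinarith [mul_nonneg (sub_nonneg.2 hρ) ha₀]
  push_cast
  rw [Real.coe_toNNReal _ (sub_nonneg.2 hρ), Real.coe_toNNReal _ hρa, Real.sq_sqrt ha₀,
    Real.sq_sqrt (sub_nonneg.2 ha₁)]
  ring

lemma ProbabilityTheory.iIndepFun.indepFun_of_measurable_iSup {ι β γ : Type*}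
    [mβ : MeasurableSpace β] [MeasurableSpace γ] {f : ι → Ω → β} (hf : ∀ i, Measurable (f i))
    (hind : iIndepFun f P) {S : Set ι} {j : ι} (hj : j ∉ S) {X : Ω → γ}
    (hX : Measurable[⨆ i ∈ S, mβ.comap (f i)] X) : IndepFun X (f j) P := by
  rw [IndepFun_iff_Indep]
  have h := indep_iSup_of_disjoint (fun i => (hf i).comap_le) hind.iIndep
    (Set.disjoint_singleton_right.mpr hj)
  refine indep_of_indep_of_le h hX.comap_le ?_
  simp

end

lemma measurable_iSup_comap_of_forward_recursion {Ω : Type*} {T : ℕ} {a b : ℕ → ℝ} {z₀ : ℝ}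
    {ε Z : ℕ → Ω → ℝ} (hZ0 : Z 0 = fun _ => z₀)
    (hZ : ∀ t, 1 ≤ t → t ≤ T → Z t = fun ω => a t * Z (t - 1) ω + b t * ε t ω) :
    ∀ t ≤ T, Measurable[⨆ i ∈ Set.Iic t, MeasurableSpace.comap (ε i) inferInstance] (Z t) := by
  intro t
  induction t with
  | zero => exact fun _ => hZ0 ▸ measurable_const
  | succ t ih =>
    intro ht
    rw [hZ (t + 1) (by omega) ht, Nat.add_sub_cancel]
    have hpast := (ih (by omega)).mono
      (biSup_mono fun i hi => Set.mem_Iic.2 (Nat.le_succ_of_le hi)) le_rfl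
    have hnew := (comap_measurable (ε (t + 1))).mono
      (le_biSup (fun i => MeasurableSpace.comap (ε i) inferInstance) (Set.mem_Iic.2 le_rfl)) le_rfl
    exact (hpast.const_mul _).add (hnew.const_mul _)

theorem ddpm_forward_marginal_general {Ω : Type*} [MeasurableSpace Ω]
    (P : Measure Ω) [IsProbabilityMeasure P]
    (T : ℕ) (β : ℕ → ℝ) (hβ : ∀ t, 1 ≤ t → t ≤ T → β t ∈ Set.Ioo (0 : ℝ) 1)
    (α : ℕ → ℝ) (hα : ∀ t, α t = 1 - β t)
    (ᾱ : ℕ → ℝ) (hᾱ : ∀ t, ᾱ t = ∏ s ∈ Finset.Icc 1 t, α s)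
    (z₀ : ℝ) (ε : ℕ → Ω → ℝ) (hεmeas : ∀ t, Measurable (ε t))
    (hεindep : iIndepFun ε P)
    (hεlaw : ∀ t, 1 ≤ t → t ≤ T → P.map (ε t) = gaussianReal 0 1)
    (Z : ℕ → Ω → ℝ) (hZ0 : Z 0 = fun _ => z₀)
    (hZ : ∀ t, 1 ≤ t → t ≤ T →
      Z t = fun ω => Real.sqrt (α t) * Z (t - 1) ω + Real.sqrt (β t) * ε t ω) :
    ∀ t, 1 ≤ t → t ≤ T →
      P.map (Z t) = gaussianReal (Real.sqrt (ᾱ t) * z₀) (1 - ᾱ t).toNNReal := by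
  have hα_mem : ∀ s, 1 ≤ s → s ≤ T → α s ∈ Set.Icc (0 : ℝ) 1 := fun s h₁ h₂ => by
    obtain ⟨hβ₀, hβ₁⟩ := hβ s h₁ h₂
    constructor <;> linarith [hα s]
  have hᾱ_mem : ∀ t ≤ T, ᾱ t ∈ Set.Icc (0 : ℝ) 1 := fun t ht => by
    have h : ∀ s ∈ Icc 1 t, α s ∈ Set.Icc (0 : ℝ) 1 := fun s hs =>
      hα_mem s (mem_Icc.1 hs).1 ((mem_Icc.1 hs).2.trans ht)
    rw [hᾱ]
    exact ⟨prod_nonneg fun s hs => (h s hs).1,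
      prod_le_one (fun s hs => (h s hs).1) fun s hs => (h s hs).2⟩
  have hᾱ_succ : ∀ t, ᾱ (t + 1) = ᾱ t * α (t + 1) := fun t => by
    rw [hᾱ, hᾱ, prod_Icc_succ_top (Nat.le_add_left 1 t)]
  have hZ_past := measurable_iSup_comap_of_forward_recursion hZ0 hZ
  suffices ∀ t ≤ T, P.map (Z t) = gaussianReal (√(ᾱ t) * z₀) (1 - ᾱ t).toNNReal from
    fun t _ ht => this t ht
  intro t
  induction t with
  | zero => intro _; simp [hZ0, hᾱ 0, Measure.map_const]
  | succ t ih =>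
    intro ht
    obtain ⟨hα₀, hα₁⟩ := hα_mem (t + 1) (by omega) ht
    obtain ⟨hᾱ₀, hᾱ₁⟩ := hᾱ_mem t (by omega)
    have hβ_eq : β (t + 1) = 1 - α (t + 1) := by linarith [hα (t + 1)]
    have hindep : IndepFun (Z t) (ε (t + 1)) P :=
      hεindep.indepFun_of_measurable_iSup hεmeas (by simp) (hZ_past t (by omega))
    have hstep := map_sqrt_mul_add_sqrt_one_sub_mul hᾱ₁ hα₀ hα₁ hindep (ih (by omega))
      (hεlaw (t + 1) (by omega) ht)
    rw [hZ (t + 1) (by omega) ht, Nat.add_sub_cancel, hβ_eq, hstep, hᾱ_succ,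
      Real.sqrt_mul hᾱ₀]
    congr 1
    ring

/-- Closed-form marginal of the DDPM forward noising process: with `β_t ∈ (0,1)`,
`α_t = 1 − β_t`, `ᾱ_t = ∏_{s=1}^t α_s`, independent standard Gaussians `ε_1, …, ε_T`,
`Z_0 = z₀` and `Z_t = √α_t·Z_{t−1} + √β_t·ε_t`, the law of `Z_t` is
`N(√ᾱ_t·z₀, 1−ᾱ_t)` for all `1 ≤ t ≤ T`. -/
theorem ddpm_forward_marginal {Ω : Type*} [MeasurableSpace Ω]
    (P : Measure Ω) [IsProbabilityMeasure P]
    (T : ℕ) (hT : 1 ≤ T) (β : ℕ → ℝ) (hβ : ∀ t, 1 ≤ t → t ≤ T → β t ∈ Set.Ioo (0 : ℝ) 1)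
    (α : ℕ → ℝ) (hα : ∀ t, α t = 1 - β t)
    (ᾱ : ℕ → ℝ) (hᾱ : ∀ t, ᾱ t = ∏ s ∈ Finset.Icc 1 t, α s)
    (z₀ : ℝ) (ε : ℕ → Ω → ℝ) (hεmeas : ∀ t, Measurable (ε t))
    (hεindep : iIndepFun ε P)
    (hεlaw : ∀ t, 1 ≤ t → t ≤ T → P.map (ε t) = gaussianReal 0 1)
    (Z : ℕ → Ω → ℝ) (hZ0 : Z 0 = fun _ => z₀)
    (hZ : ∀ t, 1 ≤ t → t ≤ T →
      Z t = fun ω => Real.sqrt (α t) * Z (t - 1) ω + Real.sqrt (β t) * ε t ω) :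
    ∀ t, 1 ≤ t → t ≤ T →
      P.map (Z t) = gaussianReal (Real.sqrt (ᾱ t) * z₀) (1 - ᾱ t).toNNReal :=
  ddpm_forward_marginal_general P T β hβ α hα ᾱ hᾱ z₀ ε hεmeas hεindep hεlaw Z hZ0 hZ
end

section
/- Let ᾱ_t ∈ (0,1), ᾱ_{t−1} ∈ (0,1], σ ≥ 0 with σ² ≤ 1 − ᾱ_{t−1}, and z₀ ∈ ℝ. Suppose ε and ε′ are independent real random variables, each with law gaussianReal 0 1. Define Z_t = √ᾱ_t·z₀ + √(1−ᾱ_t)·ε and Z_{t−1} = √ᾱ_{t−1}·z₀ + √(1−ᾱ_{t−1}−σ²) · (Z_t − √ᾱ_t·z₀)/√(1−ᾱ_t) + σ·ε′. Then the law of Z_{t−1} is gaussianReal (√ᾱ_{t−1}·z₀) (1−ᾱ_{t−1}). -/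
/-! The DDIM update recovers `ε` exactly from `Z_t`, so `Z_{t−1}` is `√ᾱ_{t−1} z₀` plus the sum of
independent `N(0, 1 − ᾱ_{t−1} − σ²)` and `N(0, σ²)` noises. -/

open MeasureTheory ProbabilityTheory
open scoped NNReal

namespace ProbabilityTheory

variable {Ω : Type*} {mΩ : MeasurableSpace Ω} {P : Measure Ω}

lemma hasLaw_of_map_eq {𝓧 : Type*} {m𝓧 : MeasurableSpace 𝓧} {X : Ω → 𝓧} {μ : Measure 𝓧}
    [NeZero μ] (hX : P.map X = μ) : HasLaw X μ P :=
  ⟨AEMeasurable.of_map_ne_zero (hX ▸ NeZero.ne μ), hX⟩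

lemma IndepFun.hasLaw_const_mul_add_const_mul_gaussianReal {X Y : Ω → ℝ} {m₁ m₂ : ℝ}
    {v₁ v₂ : ℝ≥0} (hXY : IndepFun X Y P) (hX : HasLaw X (gaussianReal m₁ v₁) P)
    (hY : HasLaw Y (gaussianReal m₂ v₂) P) (a b : ℝ) :
    HasLaw (fun ω ↦ a * X ω + b * Y ω)
      (gaussianReal (a * m₁ + b * m₂) (⟨a ^ 2, sq_nonneg a⟩ * v₁ + ⟨b ^ 2, sq_nonneg b⟩ * v₂)) P where
  aemeasurable := by fun_prop
  map_eq := gaussianReal_add_gaussianReal_of_indepFun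
    (hXY.comp (measurable_const_mul a) (measurable_const_mul b))
    (gaussianReal_const_mul hX a).map_eq (gaussianReal_const_mul hY b).map_eq

end ProbabilityTheory

theorem ddim_reverse_marginal_general {Ω : Type*} [MeasurableSpace Ω]
    (P : Measure Ω)
    (ᾱt ᾱprev σ : ℝ) (hᾱt : ᾱt ∈ Set.Ioo (0 : ℝ) 1)
    (hσ2 : σ ^ 2 ≤ 1 - ᾱprev)
    (z₀ : ℝ) (ε ε' : Ω → ℝ)
    (hindep : IndepFun ε ε' P)
    (hεlaw : P.map ε = gaussianReal 0 1) (hε'law : P.map ε' = gaussianReal 0 1)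
    (Zt Zprev : Ω → ℝ)
    (hZt : Zt = fun ω => Real.sqrt ᾱt * z₀ + Real.sqrt (1 - ᾱt) * ε ω)
    (hZprev : Zprev = fun ω => Real.sqrt ᾱprev * z₀
      + Real.sqrt (1 - ᾱprev - σ ^ 2) * ((Zt ω - Real.sqrt ᾱt * z₀) / Real.sqrt (1 - ᾱt))
      + σ * ε' ω) :
    P.map Zprev = gaussianReal (Real.sqrt ᾱprev * z₀) (1 - ᾱprev).toNNReal := by
  set a := Real.sqrt (1 - ᾱprev - σ ^ 2)
  have hnoise_recovered : Zprev = fun ω ↦ a * ε ω + σ * ε' ω + Real.sqrt ᾱprev * z₀ := by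
    have : Real.sqrt (1 - ᾱt) ≠ 0 := (Real.sqrt_pos.mpr (by linarith [hᾱt.2])).ne'
    ext ω
    simp only [hZprev, hZt]
    field_simp
    ring
  have hZprev_law := gaussianReal_add_const (hindep.hasLaw_const_mul_add_const_mul_gaussianReal
    (hasLaw_of_map_eq hεlaw) (hasLaw_of_map_eq hε'law) a σ)
    (Real.sqrt ᾱprev * z₀)
  rw [hnoise_recovered, hZprev_law.map_eq]
  congr 1
  · ring
  · have hσ2_le : 0 ≤ 1 - ᾱprev := (sq_nonneg σ).trans hσ2
    ext
    change a ^ 2 * 1 + σ ^ 2 * 1 = ((1 - ᾱprev).toNNReal : ℝ)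
    rw [Real.coe_toNNReal _ hσ2_le, Real.sq_sqrt (sub_nonneg.mpr hσ2)]
    ring

/-- Marginal consistency of the non-Markovian (DDIM) reverse transition: with
`Z_t = √ᾱ_t·z₀ + √(1−ᾱ_t)·ε` and
`Z_{t−1} = √ᾱ_{t−1}·z₀ + √(1−ᾱ_{t−1}−σ²)·(Z_t − √ᾱ_t·z₀)/√(1−ᾱ_t) + σ·ε′`
for independent standard Gaussians `ε, ε′`, the law of `Z_{t−1}` is
`N(√ᾱ_{t−1}·z₀, 1−ᾱ_{t−1})`. -/
theorem ddim_reverse_marginal {Ω : Type*} [MeasurableSpace Ω]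
    (P : Measure Ω) [IsProbabilityMeasure P]
    (ᾱt ᾱprev σ : ℝ) (hᾱt : ᾱt ∈ Set.Ioo (0 : ℝ) 1) (hᾱprev : ᾱprev ∈ Set.Ioc (0 : ℝ) 1)
    (hσ : 0 ≤ σ) (hσ2 : σ ^ 2 ≤ 1 - ᾱprev)
    (z₀ : ℝ) (ε ε' : Ω → ℝ) (hε : Measurable ε) (hε' : Measurable ε')
    (hindep : IndepFun ε ε' P)
    (hεlaw : P.map ε = gaussianReal 0 1) (hε'law : P.map ε' = gaussianReal 0 1)
    (Zt Zprev : Ω → ℝ)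
    (hZt : Zt = fun ω => Real.sqrt ᾱt * z₀ + Real.sqrt (1 - ᾱt) * ε ω)
    (hZprev : Zprev = fun ω => Real.sqrt ᾱprev * z₀
      + Real.sqrt (1 - ᾱprev - σ ^ 2) * ((Zt ω - Real.sqrt ᾱt * z₀) / Real.sqrt (1 - ᾱt))
      + σ * ε' ω) :
    P.map Zprev = gaussianReal (Real.sqrt ᾱprev * z₀) (1 - ᾱprev).toNNReal :=
  ddim_reverse_marginal_general P ᾱt ᾱprev σ hᾱt hσ2 z₀ ε ε' hindep hεlaw hε'law Zt Zprev hZt hZprev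
end

section
/- Let β_t ∈ (0,1) and ᾱ_{t−1} ∈ (0,1), set α_t = 1 − β_t and ᾱ_t = α_t · ᾱ_{t−1}, define a = √α_t·(1−ᾱ_{t−1})/(1−ᾱ_t), b = √ᾱ_{t−1}·β_t/(1−ᾱ_t), β̃ = (1−ᾱ_{t−1})·β_t/(1−ᾱ_t), and let z₀ ∈ ℝ. Suppose Z_t and ε′ are independent real random variables, with the law of Z_t equal to gaussianReal (√ᾱ_t·z₀) (1−ᾱ_t) and the law of ε′ equal to gaussianReal 0 1. Then the law of a·Z_t + b·z₀ + √β̃·ε′ is gaussianReal (√ᾱ_{t−1}·z₀) (1−ᾱ_{t−1}). -/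
open MeasureTheory ProbabilityTheory
open scoped NNReal

/-! Independent Gaussians combine affinely into a Gaussian, so the law in question has mean
`(a √ᾱ_t + b) z₀` and variance `a² (1 - ᾱ_t) + β̃`. Writing `α = α_t`, `s = ᾱ_{t-1}`, both reduce
through the single identity `α (1 - s) + (1 - α) = 1 - α s`, i.e. `α_t (1 - ᾱ_{t-1}) + β_t = 1 - ᾱ_t`. -/

lemma ProbabilityTheory.IndepFun.map_affine_add_eq_gaussianReal {Ω : Type*} [MeasurableSpace Ω]
    {P : Measure Ω} {X Y : Ω → ℝ} {m₁ m₂ m : ℝ} {v₁ v₂ v : ℝ≥0} (hXY : IndepFun X Y P)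
    (hX : P.map X = gaussianReal m₁ v₁) (hY : P.map Y = gaussianReal m₂ v₂) (c d e : ℝ)
    (hm : c * m₁ + d + e * m₂ = m) (hv : c ^ 2 * v₁ + e ^ 2 * v₂ = (v : ℝ)) :
    P.map (fun ω ↦ c * X ω + d + e * Y ω) = gaussianReal m v := by
  have hX' : HasLaw X (gaussianReal m₁ v₁) P :=
    ⟨AEMeasurable.of_map_ne_zero (by simp [hX, NeZero.ne]), hX⟩
  have hY' : HasLaw Y (gaussianReal m₂ v₂) P :=
    ⟨AEMeasurable.of_map_ne_zero (by simp [hY, NeZero.ne]), hY⟩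
  have hindep : IndepFun (fun ω ↦ c * X ω + d) (fun ω ↦ e * Y ω) P :=
    hXY.comp (φ := fun x ↦ c * x + d) (ψ := fun y ↦ e * y) (by fun_prop) (by fun_prop)
  have hsum := gaussianReal_add_gaussianReal_of_indepFun hindep
    (gaussianReal_add_const (gaussianReal_const_mul hX' c) d).map_eq
    (gaussianReal_const_mul hY' e).map_eq
  rw [← hm, show v = .mk (c ^ 2) (sq_nonneg _) * v₁ + .mk (e ^ 2) (sq_nonneg _) * v₂ from
    NNReal.eq (by simp [← hv])]
  exact hsum

lemma ddpm_posterior_mean_identity {α s : ℝ} (hα : 0 ≤ α) (hαs : 1 - α * s ≠ 0) :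
    √α * (1 - s) / (1 - α * s) * √(α * s) + √s * (1 - α) / (1 - α * s) = √s := by
  rw [Real.sqrt_mul hα, div_mul_eq_mul_div, ← add_div, div_eq_iff hαs]
  linear_combination (1 - s) * √s * Real.sq_sqrt hα

lemma ddpm_posterior_variance_identity {α s : ℝ} (hα : 0 ≤ α) (hαs : 1 - α * s ≠ 0) :
    (√α * (1 - s) / (1 - α * s)) ^ 2 * (1 - α * s) + (1 - s) * (1 - α) / (1 - α * s) = 1 - s := by
  rw [div_pow, mul_pow, Real.sq_sqrt hα]
  field_simp
  ring

theorem ddpm_reverse_one_step_general {Ω : Type*} [MeasurableSpace Ω]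
    (P : Measure Ω)
    (βt ᾱprev αt ᾱt a b βtil : ℝ)
    (hβt : βt ∈ Set.Ioo (0 : ℝ) 1) (hᾱprev : ᾱprev ∈ Set.Ioo (0 : ℝ) 1)
    (hαt : αt = 1 - βt) (hᾱt : ᾱt = αt * ᾱprev)
    (ha : a = Real.sqrt αt * (1 - ᾱprev) / (1 - ᾱt))
    (hb : b = Real.sqrt ᾱprev * βt / (1 - ᾱt))
    (hβtil : βtil = (1 - ᾱprev) * βt / (1 - ᾱt))
    (z₀ : ℝ) (Zt ε' : Ω → ℝ)
    (hindep : IndepFun Zt ε' P)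
    (hZtlaw : P.map Zt = gaussianReal (Real.sqrt ᾱt * z₀) (1 - ᾱt).toNNReal)
    (hε'law : P.map ε' = gaussianReal 0 1) :
    P.map (fun ω => a * Zt ω + b * z₀ + Real.sqrt βtil * ε' ω)
      = gaussianReal (Real.sqrt ᾱprev * z₀) (1 - ᾱprev).toNNReal := by
  obtain ⟨hβ₀, hβ₁⟩ := hβt
  obtain ⟨hs₀, hs₁⟩ := hᾱprev
  obtain rfl : βt = 1 - αt := by linarith
  subst hᾱt ha hb hβtil
  have hα : 0 ≤ αt := by linarith
  have hαs : 0 < 1 - αt * ᾱprev := by nlinarith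
  have hβtil : 0 ≤ (1 - ᾱprev) * (1 - αt) / (1 - αt * ᾱprev) := by
    apply div_nonneg <;> nlinarith
  refine hindep.map_affine_add_eq_gaussianReal hZtlaw hε'law _ _ _ ?_ ?_
  · rw [mul_zero, add_zero, ← mul_assoc, ← add_mul,
      ddpm_posterior_mean_identity hα hαs.ne']
  · rw [Real.coe_toNNReal _ hαs.le, Real.coe_toNNReal _ (by linarith), NNReal.coe_one, mul_one,
      Real.sq_sqrt hβtil, ddpm_posterior_variance_identity hα hαs.ne']

/-- One step of the DDPM reverse process with the exact posterior transition
`N(a·z_t + b·z₀, β̃)`, started from the forward marginal `N(√ᾱ_t·z₀, 1−ᾱ_t)` at step `t`,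
reproduces the forward marginal `N(√ᾱ_{t−1}·z₀, 1−ᾱ_{t−1})` at step `t−1`. -/
theorem ddpm_reverse_one_step {Ω : Type*} [MeasurableSpace Ω]
    (P : Measure Ω) [IsProbabilityMeasure P]
    (βt ᾱprev αt ᾱt a b βtil : ℝ)
    (hβt : βt ∈ Set.Ioo (0 : ℝ) 1) (hᾱprev : ᾱprev ∈ Set.Ioo (0 : ℝ) 1)
    (hαt : αt = 1 - βt) (hᾱt : ᾱt = αt * ᾱprev)
    (ha : a = Real.sqrt αt * (1 - ᾱprev) / (1 - ᾱt))
    (hb : b = Real.sqrt ᾱprev * βt / (1 - ᾱt))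
    (hβtil : βtil = (1 - ᾱprev) * βt / (1 - ᾱt))
    (z₀ : ℝ) (Zt ε' : Ω → ℝ) (hZt : Measurable Zt) (hε' : Measurable ε')
    (hindep : IndepFun Zt ε' P)
    (hZtlaw : P.map Zt = gaussianReal (Real.sqrt ᾱt * z₀) (1 - ᾱt).toNNReal)
    (hε'law : P.map ε' = gaussianReal 0 1) :
    P.map (fun ω => a * Zt ω + b * z₀ + Real.sqrt βtil * ε' ω)
      = gaussianReal (Real.sqrt ᾱprev * z₀) (1 - ᾱprev).toNNReal :=
  ddpm_reverse_one_step_general P βt ᾱprev αt ᾱt a b βtil hβt hᾱprev hαt hᾱt ha hb hβtil z₀ Zt ε'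
    hindep hZtlaw hε'law
end
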